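/- arXiv:2502.17274 — 2 statements merged into one kernel-verified Lean document; each statement's English description precedes it below -/
import Mathlib

section
/- Let ζ, t ∈ ℂ satisfy |t|·e^{|ζt|} < 1. Then the series Σ_{n=0}^{∞} f̃_n(ζ)·t^n, where f̃_n(ζ) := Σ_{j=0}^{n} ((j+1)ζ)^{n−j}/(n−j)!, converges absolutely, its sum equals 1/(e^{−ζt} − t), and the denominator e^{−ζt} − t is nonzero. That is, 1/(e^{−ζt} − t) is the generating function of the polynomial sequence (f̃_n)_{n≥0}. -/
/-! With `z = ζ t`, the term `f̃_n(ζ) tⁿ` is the antidiagonal sum `∑_{j+k=n} t^j ((j+1)z)^k / k!`.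
Summing this double series over `k` first gives `t^j e^{(j+1)z} = e^z (t e^z)^j`, and then the
geometric series gives `e^z / (1 - t e^z) = 1 / (e^{-z} - t)`. The same computation with `‖t‖, ‖z‖`
in place of `t, z` shows that the double series converges absolutely when `‖t‖ e^{‖z‖} < 1`. -/

open Finset

/-- `f̃_n(ζ) := Σ_{j=0}^{n} ((j+1)ζ)^{n−j}/(n−j)!`. -/
noncomputable def ftPoly (n : ℕ) (ζ : ℂ) : ℂ :=
  ∑ j ∈ range (n + 1),
    (((j + 1 : ℕ) : ℂ) * ζ) ^ (n - j) / ((Nat.factorial (n - j) : ℂ))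

open Nat NormedSpace

theorem HasSum.sum_antidiagonal {A M : Type*} [AddCommMonoid A] [HasAntidiagonal A]
    [AddCommMonoid M] [TopologicalSpace M] [ContinuousAdd M] [RegularSpace M]
    {F : A × A → M} {a : M} (h : HasSum F a) :
    HasSum (fun n => ∑ p ∈ antidiagonal n, F p) a :=
  (HasAntidiagonal.sigmaAntidiagonalEquivProd.hasSum_iff.mpr h).sigma fun n => by
    rw [← sum_finset_coe]
    exact hasSum_fintype _

section GeomExpTerm

variable {𝕂 : Type*} [NormedField 𝕂]

noncomputable def geomExpTerm (t z : 𝕂) (p : ℕ × ℕ) : 𝕂 :=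
  t ^ p.1 * (((p.1 + 1 : ℕ) : 𝕂) * z) ^ p.2 / (p.2 ! : 𝕂)

variable [NormedAlgebra ℚ 𝕂] [CompleteSpace 𝕂]

theorem hasSum_geomExpTerm_fiber (t z : 𝕂) (j : ℕ) :
    HasSum (fun k => geomExpTerm t z (j, k)) (exp z * (t * exp z) ^ j) := by
  have hexp : t ^ j * exp (((j + 1 : ℕ) : 𝕂) * z) = exp z * (t * exp z) ^ j := by
    rw [Nat.cast_succ, add_mul, one_mul, ← nsmul_eq_mul, exp_add, exp_nsmul]
    ring
  simpa only [geomExpTerm, mul_div_assoc, hexp] using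
    (expSeries_div_hasSum_exp (((j + 1 : ℕ) : 𝕂) * z)).mul_left (t ^ j)

theorem hasSum_geomExpTerm {t z : 𝕂} (hs : Summable (geomExpTerm t z))
    (h : ‖t * exp z‖ < 1) : HasSum (geomExpTerm t z) (exp z * (1 - t * exp z)⁻¹) := by
  have hgeom := (hasSum_geometric_of_norm_lt_one h).mul_left (exp z)
  rw [hgeom.unique (hs.hasSum.prod_fiberwise (hasSum_geomExpTerm_fiber t z))]
  exact hs.hasSum

end GeomExpTerm

theorem summable_geomExpTerm_real {r a : ℝ} (hr : 0 ≤ r) (ha : 0 ≤ a)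
    (h : r * Real.exp a < 1) : Summable (geomExpTerm r a) := by
  have hgeom : ‖r * exp a‖ < 1 := by
    rwa [← Real.exp_eq_exp_ℝ, Real.norm_of_nonneg (by positivity)]
  refine (summable_prod_of_nonneg fun p => by simp only [Pi.zero_apply, geomExpTerm]; positivity).2
    ⟨fun j => (hasSum_geomExpTerm_fiber r a j).summable, ?_⟩
  simp_rw [(hasSum_geomExpTerm_fiber r a _).tsum_eq]
  exact ((hasSum_geometric_of_norm_lt_one hgeom).mul_left (exp a)).summable

theorem norm_geomExpTerm {𝕂 : Type*} [RCLike 𝕂] (t z : 𝕂) (p : ℕ × ℕ) :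
    ‖geomExpTerm t z p‖ = geomExpTerm ‖t‖ ‖z‖ p := by
  simp only [geomExpTerm, norm_div, norm_mul, norm_pow, RCLike.norm_natCast]

theorem summable_norm_geomExpTerm {𝕂 : Type*} [RCLike 𝕂] {t z : 𝕂}
    (h : ‖t‖ * Real.exp ‖z‖ < 1) : Summable fun p => ‖geomExpTerm t z p‖ := by
  simpa only [norm_geomExpTerm] using
    summable_geomExpTerm_real (norm_nonneg t) (norm_nonneg z) h

theorem ftPoly_mul_pow_eq_sum_antidiagonal (n : ℕ) (ζ t : ℂ) :
    ftPoly n ζ * t ^ n = ∑ p ∈ antidiagonal n, geomExpTerm t (ζ * t) p := by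
  rw [Nat.sum_antidiagonal_eq_sum_range_succ_mk, ftPoly, sum_mul]
  refine sum_congr rfl fun j hj => ?_
  obtain ⟨k, rfl⟩ := Nat.exists_eq_add_of_le (Nat.lt_succ_iff.mp (mem_range.mp hj))
  simp only [geomExpTerm, Nat.add_sub_cancel_left, pow_add, mul_pow]
  ring

/-- If `|t|·e^{|ζt|} < 1` then `Σ_{n=0}^{∞} f̃_n(ζ)·t^n` converges absolutely, the
denominator `e^{−ζt} − t` is nonzero, and the sum equals `1/(e^{−ζt} − t)`:
`1/(e^{−ζt} − t)` is the generating function of `(f̃_n)_{n≥0}`. -/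
theorem ftPoly_generating_function (ζ t : ℂ)
    (h : ‖t‖ * Real.exp ‖ζ * t‖ < 1) :
    Complex.exp (-ζ * t) - t ≠ 0 ∧
    Summable (fun n : ℕ => ‖ftPoly n ζ * t ^ n‖) ∧
    ∑' n : ℕ, ftPoly n ζ * t ^ n = 1 / (Complex.exp (-ζ * t) - t) := by
  have hlt : ‖t * Complex.exp (ζ * t)‖ < 1 :=
    (norm_mul_le _ _).trans_lt <|
      (mul_le_mul_of_nonneg_left (Complex.norm_exp_le_exp_norm _) (norm_nonneg t)).trans_lt h
  have hfactor : Complex.exp (-ζ * t) - t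
      = Complex.exp (-(ζ * t)) * (1 - t * Complex.exp (ζ * t)) := by
    rw [mul_sub, mul_one, mul_left_comm, ← Complex.exp_add, neg_add_cancel, Complex.exp_zero,
      mul_one, neg_mul]
  have hne : Complex.exp (-ζ * t) - t ≠ 0 := by
    rw [hfactor]
    exact mul_ne_zero (Complex.exp_ne_zero _) (sub_ne_zero.mpr fun h1 => by simp [← h1] at hlt)
  have hnorm := summable_norm_geomExpTerm h
  have hsum := hasSum_geomExpTerm hnorm.of_norm (by rwa [← Complex.exp_eq_exp_ℂ])
  refine ⟨hne, ?_, ?_⟩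
  · refine hnorm.hasSum.sum_antidiagonal.summable.of_nonneg_of_le (fun _ => norm_nonneg _)
      fun n => ?_
    rw [ftPoly_mul_pow_eq_sum_antidiagonal]
    exact norm_sum_le _ _
  · simp_rw [ftPoly_mul_pow_eq_sum_antidiagonal]
    rw [hsum.sum_antidiagonal.tsum_eq, ← Complex.exp_eq_exp_ℂ, hfactor, one_div, mul_inv,
      Complex.exp_neg, inv_inv]
end

section
/- Let q ≥ 1 and s > q be integers, α > 0 and R > 0 real, t₀ ∈ ℝ, and let f : ℂ → ℂ be holomorphic on an open set containing the closed disk of radius R centered at t₀. Let ω_k := exp(2πik/s) and, for r > 0, define f̂_m(r) := (1/s)·Σ_{k=1}^{s} ω_k^{−m}·f(t₀ + r·ω_k) and Q(r) := r·Σ_{ν=1}^{q} ( (1/s)·Σ_{j=1}^{s} (α+ω_j)^{ν}/ν )·f̂_{ν−1}(r). Then there exists a constant C > 0 such that for all r with 0 < r ≤ R/(1+α): | Q(r) − ∫_{0}^{αr} f(t₀ + t) dt | ≤ C·r^{q+1}. That is, with time step τ = αr, the quadrature (r/s)·𝟙ᵀB(α)f^{[n]} of the Adams–Bashforth-type integrator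 approximates ∫_{t_n}^{t_n+τ} f(t) dt with error O(τ^{q+1}) when s > q. -/
/-!
Expand `f (t₀ + z) = ∑ aₙ zⁿ` on the disk. Sampling on the circle `|z| = r` aliases the
coefficients: `f̂_m(r) = ∑_{n ≡ m (mod s)} aₙ rⁿ`, and because `ν < s` the binomial expansion
against the roots of unity gives `(1/s) ∑_j (α + ω_j)^ν = α^ν`. Hence
`Q(r) - ∫₀^{αr} f = ∑ₙ aₙ (μₙ - α^{n+1}/(n+1)) r^{n+1}`, where `μₙ` is the value of the quadrature
on `zⁿ`. For `n < q < s` the only index aliased onto `n` is `ν = n + 1`, so `μₙ = α^{n+1}/(n+1)`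
and the series starts at `r^{q+1}`. As `r` and `αr` stay strictly inside the disk when
`r ≤ R/(1+α)`, the remaining tail is `O(r^{q+1})` uniformly in `r`.
-/

open Finset

/-- The `s`-th roots of unity: `ω k = exp(2πik/s)`. -/
noncomputable def omegaU (s k : ℕ) : ℂ :=
  Complex.exp (2 * Real.pi * Complex.I * k / s)

/-- The trapezoidal Fourier coefficient
`f̂_m(r) := (1/s)·Σ_{k=1}^{s} ω_k^{−m}·f(t₀ + rω_k)`. -/
noncomputable def fhat (s : ℕ) (f : ℂ → ℂ) (t₀ : ℝ) (m : ℕ) (r : ℝ) : ℂ :=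
  (1 / (s : ℂ)) * ∑ k ∈ Icc 1 s, (omegaU s k) ^ (-(m : ℤ)) * f ((t₀ : ℂ) + (r : ℂ) * omegaU s k)

/-- The ABTI quadrature
`Q(r) := r·Σ_{ν=1}^{q} ((1/s)·Σ_{j=1}^{s} (α+ω_j)^ν/ν)·f̂_{ν−1}(r)`. -/
noncomputable def Qquad (q s : ℕ) (α : ℝ) (f : ℂ → ℂ) (t₀ : ℝ) (r : ℝ) : ℂ :=
  (r : ℂ) * ∑ ν ∈ Icc 1 q,
    ((1 / (s : ℂ)) * ∑ j ∈ Icc 1 s, ((α : ℂ) + omegaU s j) ^ ν / (ν : ℂ))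
      * fhat s f t₀ (ν - 1) r

section RootsOfUnity

variable {K : Type*} [Field K] {ζ : K} {s : ℕ}

theorem IsPrimitiveRoot.sum_Icc_pow_zpow (h : IsPrimitiveRoot ζ s) (j : ℤ) :
    ∑ k ∈ Icc 1 s, (ζ ^ k) ^ j = if (s : ℤ) ∣ j then (s : K) else 0 := by
  have hcomm : ∀ k : ℕ, (ζ ^ k) ^ j = (ζ ^ j) ^ k := fun k => by
    rw [← zpow_natCast, ← zpow_natCast, ← zpow_mul, ← zpow_mul, mul_comm]
  simp_rw [hcomm]
  split_ifs with hdvd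
  · simp [(h.zpow_eq_one_iff_dvd j).mpr hdvd]
  · have hw : ζ ^ j ≠ 1 := mt (h.zpow_eq_one_iff_dvd j).mp hdvd
    have hws : (ζ ^ j) ^ s = 1 := by
      rw [← zpow_natCast, ← zpow_mul, mul_comm, zpow_mul, zpow_natCast, h.pow_eq_one, one_zpow]
    rw [← Finset.Ico_add_one_right_eq_Icc, geom_sum_Ico hw (by omega), pow_succ, hws]
    simp

theorem IsPrimitiveRoot.sum_Icc_add_pow (h : IsPrimitiveRoot ζ s) (x : K) {ν : ℕ} (hν : ν < s) :
    ∑ k ∈ Icc 1 s, (x + ζ ^ k) ^ ν = s * x ^ ν := by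
  have hmoment : ∀ m ∈ range (ν + 1),
      ∑ k ∈ Icc 1 s, (ζ ^ k) ^ m = if m = 0 then (s : K) else 0 := by
    intro m hm
    have hdvd : (s : ℤ) ∣ m ↔ m = 0 := by
      rw [Int.natCast_dvd_natCast]
      exact ⟨fun hd => Nat.eq_zero_of_dvd_of_lt hd (by simp at hm; omega), by rintro rfl; simp⟩
    simpa only [zpow_natCast, hdvd] using h.sum_Icc_pow_zpow m
  simp_rw [add_comm x, add_pow, sum_comm (s := Icc 1 s), ← sum_mul]
  rw [sum_congr rfl fun m hm => by rw [hmoment m hm]]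
  simp

end RootsOfUnity

theorem omegaU_eq_pow (s k : ℕ) :
    omegaU s k = Complex.exp (2 * Real.pi * Complex.I / s) ^ k := by
  rw [omegaU, ← Complex.exp_nat_mul]
  ring_nf

theorem sum_omegaU_zpow {s : ℕ} (hs : s ≠ 0) (j : ℤ) :
    ∑ k ∈ Icc 1 s, omegaU s k ^ j = if (s : ℤ) ∣ j then (s : ℂ) else 0 := by
  simpa [omegaU_eq_pow] using (Complex.isPrimitiveRoot_exp s hs).sum_Icc_pow_zpow j

theorem norm_omegaU (s k : ℕ) : ‖omegaU s k‖ = 1 := by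
  rw [omegaU, show 2 * Real.pi * Complex.I * k / s = ((2 * Real.pi * k / s : ℝ) : ℂ) * Complex.I by
    push_cast; ring]
  exact Complex.norm_exp_ofReal_mul_I _

section PowerSeries

variable {𝕜 : Type*} [NontriviallyNormedField 𝕜] {f : 𝕜 → 𝕜}
  {p : FormalMultilinearSeries 𝕜 𝕜 𝕜} {x : 𝕜} {R : ℝ}

theorem HasFPowerSeriesOnBall.hasSum_coeff_mul_pow
    (hp : HasFPowerSeriesOnBall f p x (ENNReal.ofReal R)) {z : 𝕜} (hz : ‖z‖ < R) :
    HasSum (fun n => p.coeff n * z ^ n) (f (x + z)) := by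
  have hz' : z ∈ Metric.eball (0 : 𝕜) (ENNReal.ofReal R) := by
    rwa [Metric.mem_eball, edist_zero_right, ← ofReal_norm,
      ENNReal.ofReal_lt_ofReal_iff_of_nonneg (norm_nonneg z)]
  simpa [FormalMultilinearSeries.apply_eq_pow_smul_coeff, mul_comm] using hp.hasSum hz'

theorem HasFPowerSeriesOnBall.summable_norm_coeff_mul_pow
    (hp : HasFPowerSeriesOnBall f p x (ENNReal.ofReal R)) {ρ : ℝ} (hρ0 : 0 ≤ ρ) (hρ : ρ < R) :
    Summable fun n => ‖p.coeff n‖ * ρ ^ n := by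
  have hlt : ((ρ.toNNReal : NNReal) : ENNReal) < p.radius :=
    lt_of_lt_of_le ((ENNReal.ofReal_lt_ofReal_iff (hρ0.trans_lt hρ)).mpr hρ) hp.r_le
  simpa [Real.coe_toNNReal _ hρ0, FormalMultilinearSeries.norm_apply_eq_norm_coef]
    using p.summable_norm_mul_pow hlt

end PowerSeries

theorem HasFPowerSeriesOnBall.hasSum_intervalIntegral {f : ℂ → ℂ}
    {p : FormalMultilinearSeries ℂ ℂ ℂ} {x : ℂ} {R T : ℝ}
    (hp : HasFPowerSeriesOnBall f p x (ENNReal.ofReal R)) (hT : |T| < R) :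
    HasSum (fun n : ℕ => p.coeff n * (T : ℂ) ^ (n + 1) / (n + 1))
      (∫ t in (0 : ℝ)..T, f (x + t)) := by
  have hmonomial : ∀ n : ℕ, ∫ t in (0 : ℝ)..T, p.coeff n * (t : ℂ) ^ n
      = p.coeff n * (T : ℂ) ^ (n + 1) / (n + 1) := fun n => by
    rw [intervalIntegral.integral_const_mul]
    simp_rw [← Complex.ofReal_pow]
    rw [intervalIntegral.integral_ofReal, integral_pow]
    push_cast
    ring
  have habs : ∀ t ∈ Set.uIoc 0 T, |t| ≤ |T| := fun t ht => by
    rcases Set.mem_uIoc.mp ht with ⟨h1, h2⟩ | ⟨h1, h2⟩ <;> rw [abs_le] <;> constructor <;>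
      linarith [neg_abs_le T, le_abs_self T]
  simp_rw [← hmonomial]
  refine intervalIntegral.hasSum_integral_of_dominated_convergence
    (fun n _ => ‖p.coeff n‖ * |T| ^ n) (fun n => by fun_prop) (fun n => ?_) ?_
    intervalIntegrable_const ?_
  · refine .of_forall fun t ht => ?_
    rw [norm_mul, norm_pow, Complex.norm_real, Real.norm_eq_abs]
    exact mul_le_mul_of_nonneg_left (pow_le_pow_left₀ (abs_nonneg t) (habs t ht) n) (norm_nonneg _)
  · exact .of_forall fun t _ => hp.summable_norm_coeff_mul_pow (abs_nonneg T) hT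
  · refine .of_forall fun t ht => hp.hasSum_coeff_mul_pow ?_
    rw [Complex.norm_real, Real.norm_eq_abs]
    exact (habs t ht).trans_lt hT

/-- The quadrature maps `f (t₀ + z) = z ^ n` to `r ^ (n + 1) * QquadMoment q s α n`. -/
noncomputable def QquadMoment (q s : ℕ) (α : ℝ) (n : ℕ) : ℂ :=
  ∑ ν ∈ Icc 1 q, if (s : ℤ) ∣ (n : ℤ) - (ν - 1 : ℕ) then (α : ℂ) ^ ν / ν else 0

section Quadrature

variable {f : ℂ → ℂ} {p : FormalMultilinearSeries ℂ ℂ ℂ} {t₀ R r : ℝ} {q s : ℕ}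

theorem hasSum_fhat (hp : HasFPowerSeriesOnBall f p (t₀ : ℂ) (ENNReal.ofReal R)) (hs : s ≠ 0)
    (m : ℕ) (hr : |r| < R) :
    HasSum (fun n : ℕ => if (s : ℤ) ∣ (n : ℤ) - m then p.coeff n * (r : ℂ) ^ n else 0)
      (fhat s f t₀ m r) := by
  have hnode : ∀ k, HasSum
      (fun n : ℕ => 1 / (s : ℂ) * (omegaU s k ^ (-(m : ℤ)) * (p.coeff n * (r * omegaU s k) ^ n)))
      (1 / (s : ℂ) * (omegaU s k ^ (-(m : ℤ)) * f (t₀ + r * omegaU s k))) := fun k =>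
    ((hp.hasSum_coeff_mul_pow (by simpa [norm_omegaU] using hr)).mul_left _).mul_left _
  rw [fhat, mul_sum]
  convert hasSum_sum fun k (_ : k ∈ Icc 1 s) => hnode k using 1
  funext n
  have hterm : ∀ k, 1 / (s : ℂ) * (omegaU s k ^ (-(m : ℤ)) * (p.coeff n * (r * omegaU s k) ^ n))
      = p.coeff n * (r : ℂ) ^ n / s * omegaU s k ^ ((n : ℤ) - m) := fun k => by
    rw [mul_pow, sub_eq_neg_add, zpow_add₀ (show omegaU s k ≠ 0 from Complex.exp_ne_zero _),
      zpow_natCast]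
    ring
  simp_rw [hterm, ← mul_sum, sum_omegaU_zpow hs]
  split_ifs
  · field_simp
  · simp

theorem Qquad_weight_eq {ν : ℕ} (hν : ν < s) (α : ℝ) :
    1 / (s : ℂ) * ∑ j ∈ Icc 1 s, ((α : ℂ) + omegaU s j) ^ ν / ν = (α : ℂ) ^ ν / ν := by
  have hs : s ≠ 0 := by omega
  simp_rw [← sum_div, omegaU_eq_pow, (Complex.isPrimitiveRoot_exp s hs).sum_Icc_add_pow _ hν]
  field_simp

theorem hasSum_Qquad (hp : HasFPowerSeriesOnBall f p (t₀ : ℂ) (ENNReal.ofReal R)) (hqs : q < s)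
    (α : ℝ) (hr : |r| < R) :
    HasSum (fun n : ℕ => p.coeff n * (r : ℂ) ^ (n + 1) * QquadMoment q s α n)
      (Qquad q s α f t₀ r) := by
  have hν : ∀ ν ∈ Icc 1 q, HasSum
      (fun n : ℕ => (α : ℂ) ^ ν / ν *
        if (s : ℤ) ∣ (n : ℤ) - (ν - 1 : ℕ) then p.coeff n * (r : ℂ) ^ n else 0)
      ((1 / (s : ℂ) * ∑ j ∈ Icc 1 s, ((α : ℂ) + omegaU s j) ^ ν / ν) * fhat s f t₀ (ν - 1) r) :=
    fun ν hν => by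
      rw [Qquad_weight_eq ((mem_Icc.mp hν).2.trans_lt hqs)]
      exact (hasSum_fhat hp (by omega) _ hr).mul_left _
  rw [Qquad]
  refine ((hasSum_sum hν).mul_left (r : ℂ)).congr_fun fun n => ?_
  simp only [QquadMoment, mul_sum, mul_ite, mul_zero]
  refine sum_congr rfl fun ν _ => ?_
  split_ifs <;> ring

theorem QquadMoment_of_lt (hqs : q < s) (α : ℝ) {n : ℕ} (hn : n < q) :
    QquadMoment q s α n = (α : ℂ) ^ (n + 1) / (n + 1) := by
  rw [QquadMoment, sum_eq_single_of_mem (n + 1) (by simp; omega)]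
  · simp
  · intro ν hν hne
    have hndvd : ¬(s : ℤ) ∣ (n : ℤ) - (ν - 1 : ℕ) := fun hdvd => by
      simp only [mem_Icc] at hν
      have := Int.eq_zero_of_abs_lt_dvd hdvd (by rw [abs_lt]; omega)
      omega
    rw [if_neg hndvd]

theorem norm_QquadMoment_le (q s : ℕ) (α : ℝ) (n : ℕ) :
    ‖QquadMoment q s α n‖ ≤ ∑ ν ∈ Icc 1 q, ‖(α : ℂ) ^ ν / ν‖ := by
  refine (norm_sum_le _ _).trans (sum_le_sum fun ν _ => ?_)
  split_ifs
  · rfl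
  · exact norm_zero.trans_le (norm_nonneg _)

theorem hasSum_Qquad_sub_integral (hp : HasFPowerSeriesOnBall f p (t₀ : ℂ) (ENNReal.ofReal R))
    (hqs : q < s) (α : ℝ) (hr : |r| < R) (hαr : |α * r| < R) :
    HasSum (fun n : ℕ => p.coeff n * (QquadMoment q s α n - (α : ℂ) ^ (n + 1) / (n + 1)) *
        (r : ℂ) ^ (n + 1))
      (Qquad q s α f t₀ r - ∫ t in (0 : ℝ)..α * r, f (t₀ + t)) := by
  refine ((hasSum_Qquad hp hqs α hr).sub (hp.hasSum_intervalIntegral hαr)).congr_fun fun n => ?_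
  push_cast
  ring

end Quadrature

theorem norm_tsum_coeff_mul_pow_le {𝕜 : Type*} [NormedField 𝕜] [CompleteSpace 𝕜] {c : ℕ → 𝕜}
    {q : ℕ} (hc : ∀ n < q, c n = 0) {ρ : ℝ} (hρ : 0 < ρ) (hsum : Summable fun n => ‖c n‖ * ρ ^ n)
    {z : 𝕜} (hz : ‖z‖ ≤ ρ) :
    ‖∑' n, c n * z ^ n‖ ≤ (∑' n, ‖c n‖ * ρ ^ n) / ρ ^ q * ‖z‖ ^ q := by
  have hterm : ∀ n, ‖c n * z ^ n‖ ≤ ‖c n‖ * ρ ^ n * (‖z‖ ^ q / ρ ^ q) := fun n => by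
    rcases lt_or_ge n q with hn | hn
    · simp [hc n hn]
    · obtain ⟨j, rfl⟩ := Nat.exists_eq_add_of_le hn
      rw [norm_mul, norm_pow, mul_assoc]
      refine mul_le_mul_of_nonneg_left ?_ (norm_nonneg _)
      calc ‖z‖ ^ (q + j) = ‖z‖ ^ q * ‖z‖ ^ j := pow_add _ _ _
        _ ≤ ‖z‖ ^ q * ρ ^ j := by gcongr
        _ = ρ ^ (q + j) * (‖z‖ ^ q / ρ ^ q) := by field_simp; ring
  have hsum' := hsum.mul_right (‖z‖ ^ q / ρ ^ q)
  calc ‖∑' n, c n * z ^ n‖ ≤ ∑' n, ‖c n * z ^ n‖ :=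
        norm_tsum_le_tsum_norm (hsum'.of_nonneg_of_le (fun _ => norm_nonneg _) hterm)
    _ ≤ ∑' n, ‖c n‖ * ρ ^ n * (‖z‖ ^ q / ρ ^ q) :=
        (hsum'.of_nonneg_of_le (fun _ => norm_nonneg _) hterm).tsum_le_tsum hterm hsum'
    _ = (∑' n, ‖c n‖ * ρ ^ n) / ρ ^ q * ‖z‖ ^ q := by rw [tsum_mul_right]; ring

theorem HasFPowerSeriesOnBall.summable_norm_coeff_mul_QquadMoment_sub {f : ℂ → ℂ}
    {p : FormalMultilinearSeries ℂ ℂ ℂ} {x : ℂ} {R ρ : ℝ}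
    (hp : HasFPowerSeriesOnBall f p x (ENNReal.ofReal R)) (q s : ℕ) (α : ℝ)
    (hρ0 : 0 ≤ ρ) (hρ : ρ < R) (hαρ : |α| * ρ < R) :
    Summable fun n : ℕ =>
      ‖p.coeff n * (QquadMoment q s α n - (α : ℂ) ^ (n + 1) / (n + 1))‖ * ρ ^ n := by
  set S := ∑ ν ∈ Icc 1 q, ‖(α : ℂ) ^ ν / ν‖
  refine Summable.of_nonneg_of_le (fun n => by positivity) (fun n => ?_)
    (((hp.summable_norm_coeff_mul_pow hρ0 hρ).mul_left S).add
      ((hp.summable_norm_coeff_mul_pow (by positivity) hαρ).mul_left |α|))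
  have hexact : ‖(α : ℂ) ^ (n + 1) / (n + 1)‖ ≤ |α| ^ (n + 1) := by
    rw [norm_div, norm_pow, Complex.norm_real, Real.norm_eq_abs]
    exact div_le_self (by positivity) (by norm_cast; simp)
  calc ‖p.coeff n * (QquadMoment q s α n - (α : ℂ) ^ (n + 1) / (n + 1))‖ * ρ ^ n
      ≤ ‖p.coeff n‖ * (S + |α| ^ (n + 1)) * ρ ^ n := by
        rw [norm_mul]
        gcongr
        exact (norm_sub_le _ _).trans (add_le_add (norm_QquadMoment_le q s α n) hexact)
    _ = S * (‖p.coeff n‖ * ρ ^ n) + |α| * (‖p.coeff n‖ * (|α| * ρ) ^ n) := by ring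

theorem abti_quadrature_error_s_gt_q_general (q s : ℕ) (hs : q < s)
    (α R : ℝ) (hα : 0 < α) (hR : 0 < R) (t₀ : ℝ) (f : ℂ → ℂ)
    (U : Set ℂ) (hball : Metric.closedBall (t₀ : ℂ) R ⊆ U)
    (hf : DifferentiableOn ℂ f U) :
    ∃ C : ℝ, 0 < C ∧ ∀ r : ℝ, 0 < r → r ≤ R / (1 + α) →
      ‖Qquad q s α f t₀ r - ∫ t in (0 : ℝ)..(α * r), f ((t₀ : ℂ) + (t : ℂ))‖
        ≤ C * r ^ (q + 1) := by
  obtain ⟨p, hp⟩ : ∃ p, HasFPowerSeriesOnBall f p (t₀ : ℂ) (ENNReal.ofReal R) :=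
    ⟨_, (hf.mono (by rwa [Real.coe_toNNReal _ hR.le])).hasFPowerSeriesOnBall
      (Real.toNNReal_pos.mpr hR)⟩
  set ρ := R / (1 + α)
  have hρ0 : 0 < ρ := by positivity
  have hρR : ρ < R := div_lt_self hR (by linarith)
  have hαρR : α * ρ < R := by
    rw [mul_div_assoc', div_lt_iff₀ (by linarith)]
    nlinarith
  set c := fun n : ℕ => p.coeff n * (QquadMoment q s α n - (α : ℂ) ^ (n + 1) / (n + 1))
  have hc : ∀ n < q, c n = 0 := fun n hn => by simp [c, QquadMoment_of_lt hs α hn]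
  have hsum := hp.summable_norm_coeff_mul_QquadMoment_sub q s α hρ0.le hρR
    (by rwa [abs_of_pos hα])
  set K := (∑' n, ‖c n‖ * ρ ^ n) / ρ ^ q
  refine ⟨K + 1, by positivity, fun r hr0 hrρ => ?_⟩
  have hE := hasSum_Qquad_sub_integral hp hs α (r := r) (by rw [abs_of_pos hr0]; linarith)
    (by rw [abs_of_pos (by positivity)]; exact (mul_le_mul_of_nonneg_left hrρ hα.le).trans_lt hαρR)
  have hbound := norm_tsum_coeff_mul_pow_le hc hρ0 hsum (z := (r : ℂ))
    (by rwa [Complex.norm_real, Real.norm_of_nonneg hr0.le])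
  rw [Complex.norm_real, Real.norm_of_nonneg hr0.le] at hbound
  have hfactor : ∑' n, c n * (r : ℂ) ^ (n + 1) = r * ∑' n, c n * (r : ℂ) ^ n := by
    rw [← tsum_mul_left]
    exact tsum_congr fun n => by ring
  rw [← hE.tsum_eq, hfactor, norm_mul, Complex.norm_real, Real.norm_of_nonneg hr0.le]
  calc r * ‖∑' n, c n * (r : ℂ) ^ n‖ ≤ r * (K * r ^ q) := by gcongr
    _ ≤ (K + 1) * r ^ (q + 1) := by rw [pow_succ]; nlinarith [pow_pos hr0 q]

/-- When `s > q`, the ABTI quadrature approximates `∫_0^{αr} f(t₀+t) dt` with error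
`O(r^{q+1})`, i.e. `O(τ^{q+1})` with `τ = αr`. -/
theorem abti_quadrature_error_s_gt_q (q s : ℕ) (hq : 1 ≤ q) (hs : q < s)
    (α R : ℝ) (hα : 0 < α) (hR : 0 < R) (t₀ : ℝ) (f : ℂ → ℂ)
    (U : Set ℂ) (hU : IsOpen U) (hball : Metric.closedBall (t₀ : ℂ) R ⊆ U)
    (hf : DifferentiableOn ℂ f U) :
    ∃ C : ℝ, 0 < C ∧ ∀ r : ℝ, 0 < r → r ≤ R / (1 + α) →
      ‖Qquad q s α f t₀ r - ∫ t in (0 : ℝ)..(α * r), f ((t₀ : ℂ) + (t : ℂ))‖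
        ≤ C * r ^ (q + 1) :=
  abti_quadrature_error_s_gt_q_general q s hs α R hα hR t₀ f U hball hf
end
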